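/- Duality of the vector-valued Schatten norm at α ≥ 1: for a positive semidefinite operator X_{AB}, ‖X‖_{S₁(B, S_∞(A))} = inf { λ ∈ ℝ : there exists a density operator σ_B with X_{AB} ≤ λ I_A ⊗ σ_B }, i.e. exp(−H_min(A|B)_X) equals the infimum over densities σ_B of the smallest λ such that X ≤ λ I ⊗ σ. -/

import Mathlib

open scoped Kronecker
open Matrix MeasureTheory
open scoped ComplexOrder
open scoped ENNReal

noncomputable section

instance matMeasurableSpace {n m : Type*} : MeasurableSpace (Matrix n m ℂ) :=
  inferInstanceAs (MeasurableSpace (n → m → ℂ))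

instance unitaryMeasurableSpace {n : Type*} [Fintype n] [DecidableEq n] :
    MeasurableSpace (Matrix.unitaryGroup n ℂ) :=
  inferInstanceAs (MeasurableSpace {U : Matrix n n ℂ // U ∈ Matrix.unitaryGroup n ℂ})

variable {n : Type*} [Fintype n] [DecidableEq n]

/-- Functional calculus for Hermitian matrices (junk value `0` otherwise). -/
def hfun (f : ℝ → ℝ) (X : Matrix n n ℂ) : Matrix n n ℂ :=
  if hX : X.IsHermitian then
    (hX.eigenvectorUnitary : Matrix n n ℂ) *
      Matrix.diagonal (fun i => (f (hX.eigenvalues i) : ℂ)) *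
      (star (hX.eigenvectorUnitary : Matrix n n ℂ))
  else 0

/-- Real matrix power via spectral calculus, with the pseudo-inverse convention `0 ^ t = 0`. -/
def mpow (X : Matrix n n ℂ) (t : ℝ) : Matrix n n ℂ :=
  hfun (fun x => if x = 0 then 0 else Real.rpow x t) X

/-- Matrix logarithm on the support. -/
def mlog (X : Matrix n n ℂ) : Matrix n n ℂ :=
  hfun (fun x => if x = 0 then 0 else Real.log x) X

/-- Trace norm (Schatten 1-norm). -/
def traceNorm (X : Matrix n n ℂ) : ℝ :=
  (((Matrix.posSemidef_conjTranspose_mul_self X).1.eigenvectorUnitary : Matrix n n ℂ) *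
    Matrix.diagonal (fun i => ((Real.sqrt ((Matrix.posSemidef_conjTranspose_mul_self X).1.eigenvalues i) : ℝ) : ℂ)) *
    (star ((Matrix.posSemidef_conjTranspose_mul_self X).1.eigenvectorUnitary : Matrix n n ℂ))).trace.re

/-- Squared Hilbert–Schmidt (Schatten 2) norm. -/
def hsNormSq (X : Matrix n n ℂ) : ℝ := ∑ i, ∑ j, ‖X i j‖ ^ 2

/-- Operator norm (Schatten ∞-norm): square root of the top eigenvalue of `Xᴴ * X`. -/
def opNorm (X : Matrix n n ℂ) : ℝ :=
  ⨆ i, Real.sqrt ((Matrix.posSemidef_conjTranspose_mul_self X).1.eigenvalues i)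

/-- Schatten `α`-norm for real `α`. -/
def schattenR (α : ℝ) (X : Matrix n n ℂ) : ℝ :=
  ((mpow (Xᴴ * X) (α / 2)).trace.re) ^ (1 / α)

/-- Partial trace over the first tensor factor. -/
def ptrFst {a b : Type*} [Fintype a] (X : Matrix (a × b) (a × b) ℂ) : Matrix b b ℂ :=
  Matrix.of fun j j' => ∑ i, X (i, j) (i, j')

/-- A density operator. -/
def IsDensity (X : Matrix n n ℂ) : Prop := X.PosSemidef ∧ X.trace = 1

/-- Swap (flip) operator on `A ⊗ A`. -/
def swapM (a : Type*) [Fintype a] [DecidableEq a] : Matrix (a × a) (a × a) ℂ :=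
  Matrix.of fun p q => if p.1 = q.2 ∧ p.2 = q.1 then 1 else 0

/-- Normalized maximally entangled state `Φ = (1/d) Σ_{i j} |ii⟩⟨jj|`. -/
def phiM (a : Type*) [Fintype a] [DecidableEq a] : Matrix (a × a) (a × a) ℂ :=
  Matrix.of fun p q => if p.1 = p.2 ∧ q.1 = q.2 then ((Fintype.card a : ℂ))⁻¹ else 0

/-- Non-normalized maximally entangled operator `Φ̃ = Σ_{i j} |ii⟩⟨jj|`. -/
def phiTilde (a : Type*) [Fintype a] [DecidableEq a] : Matrix (a × a) (a × a) ℂ :=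
  Matrix.of fun p q => if p.1 = p.2 ∧ q.1 = q.2 then 1 else 0

/-- Entrywise integral of a matrix-valued function. -/
def mInt {G : Type*} [MeasurableSpace G] (μ : Measure G)
    (f : G → Matrix n n ℂ) : Matrix n n ℂ :=
  Matrix.of fun i j => ∫ x, f x i j ∂μ

/-- Choi state (normalized Choi–Jamiołkowski matrix) of a map `T`, on `A' ⊗ C`. -/
def choiM {a c : Type*} [Fintype a] [DecidableEq a]
    (T : Matrix a a ℂ → Matrix c c ℂ) : Matrix (a × c) (a × c) ℂ :=
  Matrix.of fun p q =>
    ((Fintype.card a : ℂ))⁻¹ * (T (Matrix.single p.1 q.1 1)) p.2 q.2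

/-- The extension `T ⊗ id_E` of a map `T : B(A) → B(C)` applied to an operator on `A ⊗ E`. -/
def tensorExt {a c e : Type*} [Fintype a] [DecidableEq a]
    (T : Matrix a a ℂ → Matrix c c ℂ) (ρ : Matrix (a × e) (a × e) ℂ) :
    Matrix (c × e) (c × e) ℂ :=
  Matrix.of fun p q => ∑ i, ∑ j,
    (T (Matrix.single i j 1)) p.1 q.1 * ρ (i, p.2) (j, q.2)

/-- `T` is trace preserving. -/
def IsTracePreserving {a c : Type*} [Fintype a] [Fintype c]
    (T : Matrix a a ℂ → Matrix c c ℂ) : Prop :=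
  ∀ X, (T X).trace = X.trace

/-- The decoupling map `Θ(Y)(U) = d² ⟨Φ_{A'A}| (1 ⊗ U ⊗ 1) Y (1 ⊗ U† ⊗ 1) |Φ_{A'A}⟩`,
where `Y` is an operator on `A' ⊗ A ⊗ R` (with `R` e.g. `C ⊗ E`). -/
def Theta {a r : Type*} [Fintype a] [DecidableEq a] [Fintype r] [DecidableEq r]
    (Y : Matrix ((a × a) × r) ((a × a) × r) ℂ) (U : Matrix.unitaryGroup a ℂ) :
    Matrix r r ℂ :=
  (Fintype.card a : ℂ) • Matrix.of fun x y => ∑ i, ∑ j,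
    ((((1 : Matrix a a ℂ) ⊗ₖ (U : Matrix a a ℂ)) ⊗ₖ (1 : Matrix r r ℂ)) * Y *
      ((((1 : Matrix a a ℂ) ⊗ₖ (U : Matrix a a ℂ)) ⊗ₖ (1 : Matrix r r ℂ))ᴴ)) ((i, i), x) ((j, j), y)

/-- The completely depolarizing map acting on the `A` factor of `A' ⊗ A ⊗ R`. -/
def depolA {a r : Type*} [Fintype a] [DecidableEq a]
    (Y : Matrix ((a × a) × r) ((a × a) × r) ℂ) : Matrix ((a × a) × r) ((a × a) × r) ℂ :=
  Matrix.of fun p q =>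
    if p.1.2 = q.1.2 then
      ((Fintype.card a : ℂ))⁻¹ * ∑ k, Y ((p.1.1, k), p.2) ((q.1.1, k), q.2)
    else 0

/-- Sandwiched Rényi divergence `D*_α(ρ ‖ τ) = (1/(α-1)) log Tr[(τ^{(1-α)/(2α)} ρ τ^{(1-α)/(2α)})^α]`. -/
def sandD {m : Type*} [Fintype m] [DecidableEq m] (α : ℝ) (ρ τ : Matrix m m ℂ) : ℝ :=
  (α - 1)⁻¹ * Real.log
    ((mpow (mpow τ ((1 - α) / (2 * α)) * ρ * mpow τ ((1 - α) / (2 * α))) α).trace.re)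

/-- Sandwiched Rényi conditional entropy
`H*_α(A|B)_ρ = - inf_{σ_B density} D*_α(ρ ‖ 1 ⊗ σ_B)`, conditioning on the second factor. -/
def condSand {a b : Type*} [Fintype a] [DecidableEq a] [Fintype b] [DecidableEq b]
    (α : ℝ) (ρ : Matrix (a × b) (a × b) ℂ) : ℝ :=
  - sInf ((fun σ : Matrix b b ℂ => sandD α ρ ((1 : Matrix a a ℂ) ⊗ₖ σ)) '' {σ | IsDensity σ})

/-- Petz–Rényi conditional entropy
`H_α^↓(A|B)_ρ = (1/(1-α)) log Tr[ρ^α (1 ⊗ ρ_B)^{1-α}]`, conditioning on the second factor. -/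
def petzCond {a b : Type*} [Fintype a] [DecidableEq a] [Fintype b] [DecidableEq b]
    (α : ℝ) (ρ : Matrix (a × b) (a × b) ℂ) : ℝ :=
  (1 - α)⁻¹ * Real.log
    ((mpow ρ α * mpow ((1 : Matrix a a ℂ) ⊗ₖ ptrFst ρ) (1 - α)).trace.re)

/-- Conditional von Neumann entropy `H(A|B)_ρ`. -/
def condVN {a b : Type*} [Fintype a] [DecidableEq a] [Fintype b] [DecidableEq b]
    (ρ : Matrix (a × b) (a × b) ℂ) : ℝ :=
  - ((ρ * (mlog ρ - mlog ((1 : Matrix a a ℂ) ⊗ₖ ptrFst ρ))).trace.re)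



/-!
Write `Y_σ = (1 ⊗ σ^{-1/2}) X (1 ⊗ σ^{-1/2})`. For positive definite `σ` and `c ≥ 0`, conjugating
by the invertible `1 ⊗ σ^{-1/2}` shows `X ≤ c (1 ⊗ σ) ↔ Y_σ ≤ c`, and for positive `Y_σ` the latter
says `‖Y_σ‖_∞ ≤ c`. So each value `‖Y_σ‖_∞` lies in the right-hand set, and conversely a witness
`X ≤ λ (1 ⊗ σ)` with a singular density `σ` is turned, for every `λ' > λ`, into a positive definite
witness `X ≤ λ' (1 ⊗ σ')` with `λ' σ' = λ σ + ((λ' - λ) / d_B) 1`. Hence the two infima agree.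
-/

open scoped MatrixOrder

theorem csInf_eq_of_subset_of_forall_lt_exists_le {α : Type*}
    [ConditionallyCompleteLinearOrder α] [DenselyOrdered α] [NoMaxOrder α] {s t : Set α}
    (hst : s ⊆ t) (ht : BddBelow t) (h : ∀ x ∈ t, ∀ y, x < y → ∃ z ∈ s, z ≤ y) :
    sInf s = sInf t := by
  rcases t.eq_empty_or_nonempty with rfl | ⟨x, hx⟩
  · rw [Set.subset_empty_iff.1 hst]
  obtain ⟨y, hxy⟩ := exists_gt x
  obtain ⟨z, hz, -⟩ := h x hx y hxy
  refine le_antisymm (le_csInf ⟨x, hx⟩ fun x hx => ?_) (csInf_le_csInf ht ⟨z, hz⟩ hst)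
  refine le_of_forall_gt_imp_ge_of_dense fun y hxy => ?_
  obtain ⟨z, hz, hzy⟩ := h x hx y hxy
  exact (csInf_le (ht.mono hst) hz).trans hzy

lemma Real.sInf_image_const_zero {ι : Type*} (s : Set ι) : sInf ((fun _ => (0 : ℝ)) '' s) = 0 := by
  rcases s.eq_empty_or_nonempty with rfl | hs
  · simp
  · rw [hs.image_const, csInf_singleton]

lemma Real.sInf_setOf_const (p : Prop) : sInf {_x : ℝ | p} = 0 := by
  by_cases hp : p <;> simp [hp]

section

variable {m : Type*} [Fintype m] [DecidableEq m]

omit [Fintype m] [DecidableEq m] in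
lemma Matrix.PosSemidef.of_isEmpty [IsEmpty m] (M : Matrix m m ℂ) : M.PosSemidef :=
  ⟨by ext i; exact isEmptyElim i, fun x => by simp [Subsingleton.elim x 0]⟩

lemma Matrix.PosDef.spectrum_pos {σ : Matrix m m ℂ} (hσ : σ.PosDef) {x : ℝ}
    (hx : x ∈ spectrum ℝ σ) : 0 < x := by
  rw [hσ.1.spectrum_real_eq_range_eigenvalues] at hx
  obtain ⟨i, rfl⟩ := hx
  exact hσ.eigenvalues_pos i

lemma hfun_eq_cfc {X : Matrix m m ℂ} (hX : X.IsHermitian) (f : ℝ → ℝ) : hfun f X = cfc f X := by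
  rw [hX.cfc_eq, Matrix.IsHermitian.cfc, Unitary.conjStarAlgAut_apply, hfun, dif_pos hX]
  rfl

lemma mpow_eq_cfc {σ : Matrix m m ℂ} (hσ : σ.PosDef) (t : ℝ) :
    mpow σ t = cfc (fun x : ℝ => x ^ t) σ := by
  rw [mpow, hfun_eq_cfc hσ.1]
  exact cfc_congr fun x hx => if_neg (hσ.spectrum_pos hx).ne'

lemma mpow_isHermitian {σ : Matrix m m ℂ} (hσ : σ.PosDef) (t : ℝ) : (mpow σ t).IsHermitian :=
  mpow_eq_cfc hσ t ▸ cfc_predicate _ σ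

lemma mpow_neg_half_mul_mul_mpow_neg_half {σ : Matrix m m ℂ} (hσ : σ.PosDef) :
    mpow σ (-(1 / 2)) * σ * mpow σ (-(1 / 2)) = 1 := by
  have hcont (f : ℝ → ℝ) : ContinuousOn f (spectrum ℝ σ) := σ.finite_real_spectrum.continuousOn f
  calc mpow σ (-(1 / 2)) * σ * mpow σ (-(1 / 2))
      = cfc (fun x : ℝ => x ^ (-(1 / 2) : ℝ) * x * x ^ (-(1 / 2) : ℝ)) σ := by
        rw [cfc_mul _ _ _ (hcont _) (hcont _), cfc_mul _ _ _ (hcont _) (hcont _),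
          cfc_id' ℝ σ hσ.1.isSelfAdjoint, mpow_eq_cfc hσ]
    _ = cfc (fun _ : ℝ => 1) σ := cfc_congr fun x hx => by
        have hx := hσ.spectrum_pos hx
        rw [mul_right_comm, ← Real.rpow_add hx, ← Real.rpow_add_one hx.ne']
        norm_num
    _ = 1 := cfc_const_one ℝ σ

lemma opNorm_nonneg (Y : Matrix m m ℂ) : 0 ≤ opNorm Y :=
  Real.iSup_nonneg fun _ => Real.sqrt_nonneg _

lemma opNorm_of_isEmpty [IsEmpty m] (Y : Matrix m m ℂ) : opNorm Y = 0 :=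
  Real.iSup_of_isEmpty _

lemma opNorm_le_iff {Y : Matrix m m ℂ} (hY : Y.PosSemidef) {c : ℝ} (hc : 0 ≤ c) :
    opNorm Y ≤ c ↔ Y ≤ (c : ℂ) • 1 := by
  have hYY : Yᴴ * Y = cfc (fun x : ℝ => x ^ 2) Y := by
    rw [cfc_pow_id Y 2 hY.1.isSelfAdjoint, hY.1.eq, sq]
  have hsqrt : ∀ x ∈ spectrum ℝ Y, √(x ^ 2) = x := fun x hx =>
    Real.sqrt_sq (spectrum_nonneg_of_nonneg hY.nonneg hx)
  calc opNorm Y ≤ c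
      ↔ ∀ i, √((Matrix.posSemidef_conjTranspose_mul_self Y).1.eigenvalues i) ≤ c :=
        ⟨fun h i => (le_ciSup (Set.finite_range _).bddAbove i).trans h,
          fun h => Real.iSup_le h hc⟩
    _ ↔ ∀ x ∈ spectrum ℝ (Yᴴ * Y), √x ≤ c := by
        rw [(Matrix.posSemidef_conjTranspose_mul_self Y).1.spectrum_real_eq_range_eigenvalues,
          Set.forall_mem_range]
    _ ↔ ∀ x ∈ spectrum ℝ Y, x ≤ c := by
        rw [hYY, cfc_map_spectrum _ Y hY.1.isSelfAdjoint, Set.forall_mem_image]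
        exact forall₂_congr fun x hx => by rw [hsqrt x hx]
    _ ↔ Y ≤ algebraMap ℝ _ c := (le_algebraMap_iff_spectrum_le hY.1.isSelfAdjoint).symm
    _ ↔ Y ≤ (c : ℂ) • 1 := by rw [Algebra.algebraMap_eq_smul_one, Complex.coe_smul]

omit [DecidableEq m] in
lemma Matrix.one_kronecker_mono {n : Type*} [Fintype n] [DecidableEq n] {A B : Matrix m m ℂ}
    (h : A ≤ B) : (1 : Matrix n n ℂ) ⊗ₖ A ≤ 1 ⊗ₖ B := by
  have hsub : 1 ⊗ₖ B - 1 ⊗ₖ A = (1 : Matrix n n ℂ) ⊗ₖ (B - A) := by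
    ext
    simp [mul_sub]
  rw [Matrix.le_iff, hsub]
  exact Matrix.PosSemidef.one.kronecker h

lemma IsDensity.exists_posDef_smul_le {σ : Matrix m m ℂ} (hσ : IsDensity σ) {l l' : ℝ}
    (hl : 0 ≤ l) (hll' : l < l') :
    ∃ σ' : Matrix m m ℂ, (σ'.PosDef ∧ σ'.trace = 1) ∧ (l : ℂ) • σ ≤ (l' : ℂ) • σ' := by
  have hm : 0 < (Fintype.card m : ℝ) := by
    rcases isEmpty_or_nonempty m with hm | hm
    · simpa [Matrix.trace] using hσ.2
    · exact_mod_cast Fintype.card_pos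
  have hl' : 0 < l' := hl.trans_lt hll'
  set ε : ℝ := (l' - l) / Fintype.card m
  have hε : 0 < ε := div_pos (sub_pos.2 hll') hm
  refine ⟨l'⁻¹ • (l • σ + ε • 1), ⟨?_, ?_⟩, ?_⟩
  · exact (Matrix.PosDef.posSemidef_add (hσ.1.smul hl) (Matrix.PosDef.one.smul hε)).smul
      (inv_pos.2 hl')
  · rw [Matrix.trace_smul, Matrix.trace_add, Matrix.trace_smul, Matrix.trace_smul, hσ.2,
      Matrix.trace_one]
    simp only [ε, Complex.real_smul]
    have : (Fintype.card m : ℂ) ≠ 0 := by exact_mod_cast hm.ne'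
    push_cast
    field_simp
    ring
  · rw [Complex.coe_smul, Complex.coe_smul, smul_smul, mul_inv_cancel₀ hl'.ne', one_smul,
      Matrix.le_iff, add_sub_cancel_left]
    exact Matrix.PosSemidef.one.smul hε.le

end

section

variable {a b : Type*} [Fintype a] [DecidableEq a] [Fintype b] [DecidableEq b]

lemma le_smul_one_kronecker_iff {S σ : Matrix b b ℂ} (hS : S.IsHermitian)
    (hSσS : S * σ * S = 1) (X : Matrix (a × b) (a × b) ℂ) (c : ℂ) :
    X ≤ c • ((1 : Matrix a a ℂ) ⊗ₖ σ) ↔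
      ((1 : Matrix a a ℂ) ⊗ₖ S) * X * ((1 : Matrix a a ℂ) ⊗ₖ S) ≤ c • 1 := by
  have hU : IsUnit ((1 : Matrix a a ℂ) ⊗ₖ S) :=
    isUnit_one.kronecker (IsUnit.of_mul_eq_one (σ * S) (by rw [← mul_assoc, hSσS]))
  have hUstar : star ((1 : Matrix a a ℂ) ⊗ₖ S) = (1 : Matrix a a ℂ) ⊗ₖ S := by
    rw [Matrix.star_eq_conjTranspose, Matrix.conjTranspose_kronecker, Matrix.conjTranspose_one,
      hS.eq]
  have hconj : ((1 : Matrix a a ℂ) ⊗ₖ S) * (c • ((1 : Matrix a a ℂ) ⊗ₖ σ)) *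
      ((1 : Matrix a a ℂ) ⊗ₖ S) = c • 1 := by
    rw [Matrix.mul_smul, Matrix.smul_mul, ← Matrix.mul_kronecker_mul, ← Matrix.mul_kronecker_mul,
      hSσS, mul_one, mul_one, Matrix.one_kronecker_one]
  rw [Matrix.le_iff, Matrix.le_iff, ← hU.posSemidef_star_right_conjugate_iff, hUstar,
    Matrix.mul_sub, Matrix.sub_mul, hconj]

lemma opNorm_conj_mpow_le_iff {X : Matrix (a × b) (a × b) ℂ} (hX : X.PosSemidef)
    {σ : Matrix b b ℂ} (hσ : σ.PosDef) {c : ℝ} (hc : 0 ≤ c) :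
    opNorm (((1 : Matrix a a ℂ) ⊗ₖ mpow σ (-(1 / 2))) * X *
        ((1 : Matrix a a ℂ) ⊗ₖ mpow σ (-(1 / 2)))) ≤ c ↔
      X ≤ (c : ℂ) • ((1 : Matrix a a ℂ) ⊗ₖ σ) := by
  have hS := mpow_isHermitian hσ (-(1 / 2))
  have hY := hX.mul_mul_conjTranspose_same ((1 : Matrix a a ℂ) ⊗ₖ mpow σ (-(1 / 2)))
  rw [Matrix.conjTranspose_kronecker, Matrix.conjTranspose_one, hS.eq] at hY
  rw [opNorm_le_iff hY hc, le_smul_one_kronecker_iff hS (mpow_neg_half_mul_mul_mpow_neg_half hσ)]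

omit [DecidableEq b] in
lemma nonneg_of_le_smul_one_kronecker [Nonempty a] {X : Matrix (a × b) (a × b) ℂ}
    (hX : X.PosSemidef) {σ : Matrix b b ℂ} (hσ : σ.trace = 1) {c : ℝ}
    (h : X ≤ (c : ℂ) • ((1 : Matrix a a ℂ) ⊗ₖ σ)) : 0 ≤ c := by
  have htr : (0 : ℂ) ≤ ((c * Fintype.card a : ℝ) : ℂ) := by
    have := add_nonneg hX.trace_nonneg h.trace_nonneg
    rw [← Matrix.trace_add, add_sub_cancel, Matrix.trace_smul, Matrix.trace_kronecker,
      Matrix.trace_one, hσ, mul_one, smul_eq_mul] at this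
    exact_mod_cast this
  exact nonneg_of_mul_nonneg_left (Complex.zero_le_real.1 htr) (by exact_mod_cast Fintype.card_pos)

end

/-- For positive semidefinite `X_{AB}`,
`‖X‖_{S₁(B,S_∞(A))} = inf {λ | ∃ density σ_B, X ≤ λ 1_A ⊗ σ_B}`. -/
theorem hmin_operator_duality {a b : Type*} [Fintype a] [DecidableEq a]
    [Fintype b] [DecidableEq b]
    (X : Matrix (a × b) (a × b) ℂ) (hX : X.PosSemidef) :
    sInf ((fun σ : Matrix b b ℂ =>
        opNorm (((1 : Matrix a a ℂ) ⊗ₖ mpow σ (-(1 / 2))) * X *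
          ((1 : Matrix a a ℂ) ⊗ₖ mpow σ (-(1 / 2))))) '' {σ | σ.PosDef ∧ σ.trace = 1}) =
      sInf {lam : ℝ | ∃ σ : Matrix b b ℂ, IsDensity σ ∧
        (((lam : ℂ) • ((1 : Matrix a a ℂ) ⊗ₖ σ)) - X).PosSemidef} := by
  rcases isEmpty_or_nonempty a with ha | ha
  -- For empty `a` both sides collapse to `0`, the junk value of `sInf` on `∅` and on `ℝ`.
  · simp only [opNorm_of_isEmpty, Matrix.PosSemidef.of_isEmpty, and_true,
      Real.sInf_image_const_zero, Real.sInf_setOf_const]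
  refine csInf_eq_of_subset_of_forall_lt_exists_le ?_ ?_ ?_
  · rintro _ ⟨σ, hσ, rfl⟩
    exact ⟨σ, ⟨hσ.1.posSemidef, hσ.2⟩, (opNorm_conj_mpow_le_iff hX hσ.1 (opNorm_nonneg _)).1 le_rfl⟩
  · exact ⟨0, fun l ⟨σ, hσ, h⟩ => nonneg_of_le_smul_one_kronecker hX hσ.2 h⟩
  · rintro l ⟨σ, hσ, h⟩ l' hll'
    have hl := nonneg_of_le_smul_one_kronecker hX hσ.2 h
    obtain ⟨σ', hσ', hle⟩ := hσ.exists_posDef_smul_le hl hll'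
    refine ⟨_, ⟨σ', hσ', rfl⟩, (opNorm_conj_mpow_le_iff hX hσ'.1 (hl.trans hll'.le)).2 ?_⟩
    calc X ≤ (l : ℂ) • ((1 : Matrix a a ℂ) ⊗ₖ σ) := h
      _ = (1 : Matrix a a ℂ) ⊗ₖ ((l : ℂ) • σ) := (Matrix.kronecker_smul _ _ _).symm
      _ ≤ (1 : Matrix a a ℂ) ⊗ₖ ((l' : ℂ) • σ') := Matrix.one_kronecker_mono hle
      _ = (l' : ℂ) • ((1 : Matrix a a ℂ) ⊗ₖ σ') := Matrix.kronecker_smul _ _ _
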